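/- arXiv:2204.07364 — 10 statements merged into one kernel-verified Lean document; each statement's English description precedes it below -/
import Mathlib

section
/- Let N > 1 be an integer such that the polynomial X^2 - 3X + 1 has a root ε modulo N (i.e. ε^2 ≡ 3ε - 1 mod N) with ε coprime to N. Then (1/N) · Σ_{d=1}^{N-1} d · ((-1 - dε) mod N) = (N-1)^2 / 4, where (a mod N) denotes the unique representative in [0, N). -/
/-!
With `a = ε - 1` the root relation reads `a² ≡ ε` and `a (a - 1) ≡ 1 (mod N)`, so
`σ d = d a mod N` permutes `{1, …, N - 1}` and `σ (σ d) = d ε mod N`. Then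
`w = d + σ d - σ (σ d)` is divisible by `N` and lies strictly between `-N` and `2N`, so
`w ∈ {0, N}` and `w² = N w`. Summing over `d`, and using that sums over `{1, …, N - 1}` are
invariant under `σ`, gives `2 ∑ d σ (σ d) = 3 ∑ d² - N ∑ d`. As `(-1 - d ε) mod N` is
`N - 1 - σ (σ d)`, the theorem follows from the formulas for `∑ d` and `∑ d²`.
-/

open Finset

theorem Set.BijOn.sum_comp_eq {ι M : Type*} [AddCommMonoid M] {s : Finset ι} {σ : ι → ι}
    (hσ : Set.BijOn σ s s) (g : ι → M) : ∑ d ∈ s, g (σ d) = ∑ d ∈ s, g d :=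
  sum_nbij (f := fun d => g (σ d)) σ (fun _ hd => hσ.mapsTo hd) hσ.injOn hσ.surjOn
    fun _ _ => rfl

theorem two_mul_sum_mul_comp_comp {R : Type*} [CommRing R] {s : Finset R} {σ : R → R}
    (hσ : Set.BijOn σ s s) (c : R)
    (hw : ∀ d ∈ s, (d + σ d - σ (σ d)) ^ 2 = c * (d + σ d - σ (σ d))) :
    2 * ∑ d ∈ s, d * σ (σ d) = 3 * ∑ d ∈ s, d ^ 2 - c * ∑ d ∈ s, d := by
  have expand : ∑ d ∈ s, ((d + σ d - σ (σ d)) ^ 2 - c * (d + σ d - σ (σ d))) =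
      ∑ d ∈ s, d ^ 2 + ∑ d ∈ s, σ d ^ 2 + ∑ d ∈ s, σ (σ d) ^ 2
        + 2 * ∑ d ∈ s, d * σ d - 2 * ∑ d ∈ s, d * σ (σ d) - 2 * ∑ d ∈ s, σ d * σ (σ d)
        - c * (∑ d ∈ s, d + ∑ d ∈ s, σ d - ∑ d ∈ s, σ (σ d)) := by
    simp only [mul_sum, ← sum_add_distrib, ← sum_sub_distrib]
    exact sum_congr rfl fun d _ => by ring
  have sq : ∑ d ∈ s, σ d ^ 2 = ∑ d ∈ s, d ^ 2 := hσ.sum_comp_eq (· ^ 2)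
  have sq₂ : ∑ d ∈ s, σ (σ d) ^ 2 = ∑ d ∈ s, d ^ 2 := (hσ.sum_comp_eq (σ · ^ 2)).trans sq
  have mul : ∑ d ∈ s, σ d * σ (σ d) = ∑ d ∈ s, d * σ d := hσ.sum_comp_eq fun x => x * σ x
  have lin : ∑ d ∈ s, σ d = ∑ d ∈ s, d := hσ.sum_comp_eq id
  have lin₂ : ∑ d ∈ s, σ (σ d) = ∑ d ∈ s, d := (hσ.sum_comp_eq σ).trans lin
  rw [sum_eq_zero fun d hd => sub_eq_zero.mpr (hw d hd), sq, sq₂, mul, lin, lin₂] at expand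
  linear_combination expand

theorem two_mul_sum_Icc_id {n : ℤ} (hn : 0 ≤ n) : 2 * ∑ d ∈ Icc 1 n, d = n * (n + 1) := by
  induction n, hn using Int.leInduction with
  | base => simp
  | succ n _ ih =>
    rw [← insert_Icc_right_eq_Icc_add_one (by omega), sum_insert (by simp)]
    linear_combination ih

theorem six_mul_sum_Icc_sq {n : ℤ} (hn : 0 ≤ n) :
    6 * ∑ d ∈ Icc 1 n, d ^ 2 = n * (n + 1) * (2 * n + 1) := by
  induction n, hn using Int.leInduction with
  | base => simp
  | succ n _ ih =>
    rw [← insert_Icc_right_eq_Icc_add_one (by omega), sum_insert (by simp)]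
    linear_combination ih

section Residues

variable {N : ℤ}

theorem mul_emod_mul_emod_of_mul_modEq_one {a b x : ℤ} (hab : a * b ≡ 1 [ZMOD N])
    (hx₀ : 0 ≤ x) (hx : x < N) : x * a % N * b % N = x := by
  have : x * a % N * b ≡ x [ZMOD N] :=
    calc x * a % N * b ≡ x * (a * b) [ZMOD N] := by
          simpa only [mul_assoc] using (Int.mod_modEq (x * a) N).mul_right b
      _ ≡ x * 1 [ZMOD N] := hab.mul_left x
      _ = x := mul_one x
  rw [this, Int.emod_eq_of_lt hx₀ hx]

theorem mapsTo_mul_emod {a : ℤ} (hN : 0 < N) (ha : IsCoprime a N) :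
    Set.MapsTo (fun d => d * a % N) (Icc 1 (N - 1) : Set ℤ) (Icc 1 (N - 1) : Set ℤ) := by
  intro d hd
  simp only [coe_Icc, Set.mem_Icc] at hd ⊢
  have hne : d * a % N ≠ 0 := fun h =>
    absurd (Int.le_of_dvd (by omega) (ha.symm.dvd_of_dvd_mul_right (Int.dvd_of_emod_eq_zero h)))
      (by omega)
  have := Int.emod_nonneg (d * a) hN.ne'
  have := Int.emod_lt_of_pos (d * a) hN
  omega

theorem bijOn_mul_emod {a b : ℤ} (hN : 0 < N) (hab : a * b ≡ 1 [ZMOD N]) :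
    Set.BijOn (fun d => d * a % N) (Icc 1 (N - 1) : Set ℤ) (Icc 1 (N - 1) : Set ℤ) := by
  obtain ⟨k, hk⟩ := hab.dvd
  refine Set.InvOn.bijOn (f' := fun d => d * b % N) ⟨?_, ?_⟩
    (mapsTo_mul_emod hN ⟨b, k, by linear_combination -hk⟩)
    (mapsTo_mul_emod hN ⟨a, k, by linear_combination -hk⟩)
  · intro x hx
    simp only [coe_Icc, Set.mem_Icc] at hx
    exact mul_emod_mul_emod_of_mul_modEq_one hab (by omega) (by omega)
  · intro x hx
    simp only [coe_Icc, Set.mem_Icc] at hx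
    exact mul_emod_mul_emod_of_mul_modEq_one (mul_comm a b ▸ hab) (by omega) (by omega)

theorem sq_eq_mul_of_dvd {w : ℤ} (h : N ∣ w) (h₁ : -N < w) (h₂ : w < 2 * N) :
    w ^ 2 = N * w := by
  obtain ⟨t, rfl⟩ := h
  have : t = 0 ∨ t = 1 := by
    have : -1 < t := by nlinarith
    have : t < 2 := by nlinarith
    omega
  rcases this with rfl | rfl <;> ring

theorem four_mul_sum_mul_sub_comp_comp (hN : 0 < N) {σ : ℤ → ℤ}
    (hσ : Set.BijOn σ (Icc 1 (N - 1) : Set ℤ) (Icc 1 (N - 1) : Set ℤ))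
    (hw : ∀ d ∈ Icc 1 (N - 1), N ∣ d + σ d - σ (σ d)) :
    4 * ∑ d ∈ Icc 1 (N - 1), d * (N - 1 - σ (σ d)) = N * (N - 1) ^ 2 := by
  have hw' : ∀ d ∈ Icc 1 (N - 1), (d + σ d - σ (σ d)) ^ 2 = N * (d + σ d - σ (σ d)) := by
    intro d hd
    have h₀ := mem_Icc.mp hd
    have h₁ := hσ.mapsTo hd
    have h₂ := hσ.mapsTo h₁
    simp only [coe_Icc, Set.mem_Icc] at h₁ h₂
    exact sq_eq_mul_of_dvd (hw d hd) (by omega) (by omega)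
  have key := two_mul_sum_mul_comp_comp hσ N hw'
  have hG := two_mul_sum_Icc_id (n := N - 1) (by omega)
  have hR := six_mul_sum_Icc_sq (n := N - 1) (by omega)
  have split : ∑ d ∈ Icc 1 (N - 1), d * (N - 1 - σ (σ d)) =
      (N - 1) * ∑ d ∈ Icc 1 (N - 1), d - ∑ d ∈ Icc 1 (N - 1), d * σ (σ d) := by
    rw [mul_sum, ← sum_sub_distrib]
    exact sum_congr rfl fun _ _ => by ring
  rw [split]
  linear_combination (3 * N - 2) * hG - 2 * key - hR

theorem neg_one_sub_emod (hN : 0 < N) (x : ℤ) : (-1 - x) % N = N - 1 - x % N := by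
  have h : N - 1 - x % N ≡ -1 - x [ZMOD N] :=
    Int.modEq_iff_dvd.mpr ⟨-1 - x / N, by rw [Int.emod_def]; ring⟩
  have := Int.emod_nonneg x hN.ne'
  have := Int.emod_lt_of_pos x hN
  rw [← h, Int.emod_eq_of_lt (by omega) (by omega)]

end Residues

theorem stmt_0_general (N ε : ℤ) (hN : 1 < N) (hroot : ε ^ 2 ≡ 3 * ε - 1 [ZMOD N]) :
    4 * ∑ d ∈ Finset.Icc (1 : ℤ) (N - 1), d * ((-1 - d * ε) % N) = N * (N - 1) ^ 2 := by
  obtain ⟨k, hk⟩ := hroot.dvd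
  let σ : ℤ → ℤ := fun d => d * (ε - 1) % N
  have hunit : (ε - 1) * (ε - 2) ≡ 1 [ZMOD N] :=
    Int.modEq_iff_dvd.mpr ⟨k, by linear_combination hk⟩
  have hsq : (ε - 1) * (ε - 1) ≡ ε [ZMOD N] := Int.modEq_iff_dvd.mpr ⟨k, by linear_combination hk⟩
  have hσσ (d : ℤ) : σ (σ d) = d * ε % N :=
    calc σ d * (ε - 1) ≡ d * ((ε - 1) * (ε - 1)) [ZMOD N] := by
          simpa only [mul_assoc] using (Int.mod_modEq (d * (ε - 1)) N).mul_right (ε - 1)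
      _ ≡ d * ε [ZMOD N] := hsq.mul_left d
  have hw (d : ℤ) (_ : d ∈ Icc 1 (N - 1)) : N ∣ d + σ d - σ (σ d) := by
    refine Int.modEq_zero_iff_dvd.mp ?_
    calc d + σ d - σ (σ d) ≡ d + d * (ε - 1) - d * ε [ZMOD N] := by
          rw [hσσ]; exact ((Int.ModEq.refl d).add (Int.mod_modEq _ _)).sub (Int.mod_modEq _ _)
      _ = 0 := by ring
  calc 4 * ∑ d ∈ Icc 1 (N - 1), d * ((-1 - d * ε) % N)
      = 4 * ∑ d ∈ Icc 1 (N - 1), d * (N - 1 - σ (σ d)) := by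
        simp only [neg_one_sub_emod (by omega : 0 < N), hσσ]
    _ = N * (N - 1) ^ 2 :=
        four_mul_sum_mul_sub_comp_comp (by omega) (bijOn_mul_emod (by omega) hunit) hw

/-- Let `N > 1` with `ε` a root of `X^2 - 3X + 1` mod `N`, `ε` coprime to `N`. Then
`4 * ∑_{d=1}^{N-1} d * ((-1 - d*ε) mod N) = N * (N-1)^2`. -/
theorem stmt_0 (N ε : ℤ) (hN : 1 < N) (hroot : ε ^ 2 ≡ 3 * ε - 1 [ZMOD N])
    (hcop : IsCoprime ε N) :
    4 * ∑ d ∈ Finset.Icc (1 : ℤ) (N - 1), d * ((-1 - d * ε) % N) = N * (N - 1) ^ 2 :=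
  stmt_0_general N ε hN hroot
end

section
/- Let N > 1, k ≥ 1 be integers and v_1, …, v_k units of Z/N. For each i with 0 ≤ i < k, the value Σ_{z ∈ R(y)} C(z_1 + ⋯ + z_k, i) is independent of y ∈ Z/N, where R(y) = { (z_1,…,z_k) ∈ {0,…,N-1}^k : Σ_j z_j v_j ≡ y mod N }; in fact it equals (1/N)·Σ_{i_1+⋯+i_k = i} C(N, i_1+1)···C(N, i_k+1), a polynomial in N depending only on i and k. -/
/-! Expanding `C(z₁ + ⋯ + z_k, i)` by the multinomial Vandermonde identity gives products
`∏ C(z_j, i_j)` with `i₁ + ⋯ + i_k = i < k`, so some `i_r` vanishes. Translating the coordinate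
`z_r` modulo `N` by multiples of `(v_r)⁻¹` permutes the fibres `R(y)` transitively and leaves such a
product unchanged, so all `N` fibre sums agree and `N` times one of them is the sum over the whole
box `{0, …, N-1}^k`. That sum factors, and each factor is `C(N, i_j + 1)` by the hockey-stick
identity. -/

open Finset

theorem Nat.sum_range_choose_eq_choose_succ (n m : ℕ) :
    ∑ t ∈ range n, t.choose m = n.choose (m + 1) := by
  induction n with
  | zero => simp
  | succ n ih => rw [sum_range_succ, ih, Nat.choose_succ_succ, add_comm]

theorem Nat.choose_sum_eq_sum_piAntidiag {ι : Type*} [DecidableEq ι] (s : Finset ι)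
    (z : ι → ℕ) (i : ℕ) :
    (∑ j ∈ s, z j).choose i = ∑ m ∈ s.piAntidiag i, ∏ j ∈ s, (z j).choose (m j) := by
  induction s using Finset.cons_induction generalizing i with
  | empty => cases i <;> simp
  | cons a s ha ih =>
    rw [sum_cons, Nat.add_choose_eq, piAntidiag_cons, sum_disjiUnion]
    refine sum_congr rfl fun p _ => ?_
    rw [sum_map, ih p.2, mul_sum]
    refine sum_congr rfl fun f hf => ?_
    have hfa : f a = 0 := by_contra fun h => ha ((mem_piAntidiag.mp hf).2 a h)
    rw [prod_cons]
    simp only [addRightEmbedding_apply, Pi.add_apply, if_pos, hfa, zero_add]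
    congr 1
    refine prod_congr rfl fun j hj => ?_
    rw [if_neg (ne_of_mem_of_not_mem hj ha), add_zero]

theorem exists_eq_zero_of_sum_lt_card {ι : Type*} [Fintype ι] (m : ι → ℕ)
    (h : ∑ j, m j < Fintype.card ι) : ∃ r, m r = 0 := by
  by_contra! hm
  exact h.not_ge <| by
    simpa using card_nsmul_le_sum univ m 1 fun j _ => Nat.one_le_iff_ne_zero.mpr (hm j)

section Fibers

variable {A G M : Type*} [AddGroup A] [Fintype A] [AddGroup G] [DecidableEq G]
  [AddCommMonoid M]

theorem sum_fiber_add_eq (φ : A → G) (g : A → M) (h : A) (d : G)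
    (hφ : ∀ x, φ (x + h) = φ x + d) (hg : ∀ x, g (x + h) = g x) (y : G) :
    ∑ x with φ x = y + d, g x = ∑ x with φ x = y, g x := by
  rw [sum_filter, sum_filter]
  exact (Fintype.sum_equiv (Equiv.addRight h) _ _ fun x => by simp [hφ, hg]).symm

theorem card_nsmul_sum_fiber_eq_sum [Fintype G] (φ : A → G) (g : A → M)
    (htrans : ∀ d, ∃ h, (∀ x, φ (x + h) = φ x + d) ∧ ∀ x, g (x + h) = g x) (y : G) :
    Fintype.card G • ∑ x with φ x = y, g x = ∑ x, g x := by
  have hconst : ∀ y', ∑ x with φ x = y', g x = ∑ x with φ x = y, g x := fun y' => by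
    obtain ⟨h, hφ, hg⟩ := htrans (-y + y')
    simpa using sum_fiber_add_eq φ g h _ hφ hg y
  rw [← sum_fiberwise univ φ g, sum_congr rfl fun y' _ => hconst y', sum_const, card_univ]

end Fibers

theorem sum_piFinset_range_eq_sum_zmod {ι M : Type*} [Fintype ι] [DecidableEq ι]
    [AddCommMonoid M] (N : ℕ) [NeZero N] (F : (ι → ℕ) → M) :
    ∑ z ∈ Fintype.piFinset fun _ : ι => range N, F z = ∑ x : ι → ZMod N, F fun j => (x j).val := by
  have hval : ∀ z ∈ Fintype.piFinset fun _ : ι => range N, (fun j => (z j : ZMod N).val) = z :=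
    fun z hz => funext fun j =>
      ZMod.val_natCast_of_lt (by simpa using Fintype.mem_piFinset.mp hz j)
  exact sum_nbij' (fun z j => (z j : ZMod N)) (fun x j => (x j).val) (by simp)
    (by simp [ZMod.val_lt]) hval (by simp) fun z hz => congrArg F (hval z hz).symm

theorem card_mul_sum_fiber_prod_choose {ι : Type*} [Fintype ι] [DecidableEq ι] (N : ℕ) [NeZero N]
    (v : ι → (ZMod N)ˣ) (m : ι → ℕ) (r : ι) (hr : m r = 0) (y : ZMod N) :
    N * ∑ x : ι → ZMod N with ∑ j, x j * (v j : ZMod N) = y, ∏ j, (x j).val.choose (m j)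
      = ∏ j, N.choose (m j + 1) := by
  have htrans : ∀ d, ∃ h : ι → ZMod N,
      (∀ x, ∑ j, (x + h) j * (v j : ZMod N) = ∑ j, x j * (v j : ZMod N) + d) ∧
      ∀ x, ∏ j, ((x + h) j).val.choose (m j) = ∏ j, (x j).val.choose (m j) := fun d => by
    refine ⟨Pi.single r (d * ↑(v r)⁻¹), fun x => ?_, fun x => prod_congr rfl fun j _ => ?_⟩
    · simp [add_mul, sum_add_distrib, Pi.single_apply, mul_assoc]
    · rcases eq_or_ne j r with rfl | hj
      · simp [hr]
      · simp [hj]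
  have hfiber := card_nsmul_sum_fiber_eq_sum (fun x : ι → ZMod N => ∑ j, x j * (v j : ZMod N))
    (fun x => ∏ j, (x j).val.choose (m j)) htrans y
  rw [ZMod.card, smul_eq_mul] at hfiber
  rw [hfiber, ← sum_piFinset_range_eq_sum_zmod N fun z => ∏ j, (z j).choose (m j),
    ← prod_univ_sum (fun _ => range N) fun j t => t.choose (m j)]
  exact prod_congr rfl fun j _ => Nat.sum_range_choose_eq_choose_succ N (m j)

theorem stmt_3_general (N k : ℕ) (hN : 1 < N) (v : Fin k → (ZMod N)ˣ) (y : ZMod N)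
    (i : ℕ) (hi : i < k) :
    N * ∑ z ∈ (Fintype.piFinset fun _ : Fin k => Finset.range N).filter
        (fun z => ∑ j, (z j : ZMod N) * (v j : ZMod N) = y),
      Nat.choose (∑ j, z j) i
    = ∑ m ∈ Finset.Nat.antidiagonalTuple k i, ∏ j, Nat.choose N (m j + 1) := by
  have : NeZero N := ⟨by omega⟩
  have hvandermonde : ∀ z : Fin k → ℕ,
      (∑ j, z j).choose i = ∑ m ∈ Nat.antidiagonalTuple k i, ∏ j, (z j).choose (m j) := fun z => by
    rw [← piAntidiag_univ_fin_eq_antidiagonalTuple, Nat.choose_sum_eq_sum_piAntidiag]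
  rw [sum_filter, sum_piFinset_range_eq_sum_zmod]
  simp only [ZMod.natCast_zmod_val, hvandermonde]
  rw [← sum_filter, sum_comm, mul_sum]
  refine sum_congr rfl fun m hm => ?_
  obtain ⟨r, hr⟩ := exists_eq_zero_of_sum_lt_card m <| by
    rw [Nat.mem_antidiagonalTuple.mp hm, Fintype.card_fin]
    exact hi
  exact card_mul_sum_fiber_prod_choose N v m r hr y

/-- For `0 ≤ i < k`, the sum `∑_{z ∈ R(y)} C(z₁+⋯+z_k, i)` is independent of `y`:
`N` times it equals `∑_{i₁+⋯+i_k = i} C(N,i₁+1)⋯C(N,i_k+1)`. -/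
theorem stmt_3 (N k : ℕ) (hN : 1 < N) (hk : 0 < k) (v : Fin k → (ZMod N)ˣ) (y : ZMod N)
    (i : ℕ) (hi : i < k) :
    N * ∑ z ∈ (Fintype.piFinset fun _ : Fin k => Finset.range N).filter
        (fun z => ∑ j, (z j : ZMod N) * (v j : ZMod N) = y),
      Nat.choose (∑ j, z j) i
    = ∑ m ∈ Finset.Nat.antidiagonalTuple k i, ∏ j, Nat.choose N (m j + 1) :=
  stmt_3_general N k hN v y i hi
end

section
/- Let N > 1, k ≥ 1 be integers and v_1, …, v_k units of Z/N. For each y ∈ Z/N, Σ_{z ∈ R(y)} C(z_1 + ⋯ + z_k, k) = Σ_{(d_1,…,d_k): 1 ≤ d_j < N, Σ d_j v_j ≡ y mod N} d_1 d_2 ··· d_k + P_k(N), where P_k(N) = (1/N)·Σ_{i_1+⋯+i_k = k, i_1 i_2 ··· i_k = 0} C(N, i_1+1)···C(N, i_k+1) depends only on N and k. -/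
/-!
By the multivariate Vandermonde identity, `C(z₁ + ⋯ + z_k, k) = ∑_{m₁ + ⋯ + m_k = k} ∏ C(z_j, m_j)`;
exchange the sums over `z` and `m`. The only `m` without a zero entry is `(1, …, 1)`, whose
term is `∑ z₁ ⋯ z_k` over the solutions, to which solutions with a zero coordinate contribute
nothing. Every other `m` has some `m_r = 0`, so its summand does not depend on `z_r`; as `v_r` is a
unit, `z_r` is determined by the other coordinates, which range freely over `{0, …, N - 1}`, and
the hockey-stick identity `∑_{x < N} C(x, t) = C(N, t + 1)` gives `N⁻¹ ∏_j C(N, m_j + 1)`.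
-/

open Finset Fintype Function

theorem Nat.choose_sum_eq_sum_piAntidiag_prod_choose {ι : Type*} [DecidableEq ι] (s : Finset ι)
    (z : ι → ℕ) (n : ℕ) :
    (∑ i ∈ s, z i).choose n = ∑ m ∈ s.piAntidiag n, ∏ i ∈ s, (z i).choose (m i) := by
  induction s using Finset.cons_induction generalizing n with
  | empty => cases n <;> simp
  | cons a s ha ih =>
    rw [sum_cons, Nat.add_choose_eq, piAntidiag_cons, sum_disjiUnion]
    refine sum_congr rfl fun p _ => ?_
    rw [ih, mul_sum, sum_map]
    refine sum_congr rfl fun g hg => ?_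
    have hga : g a = 0 := by_contra fun h => ha ((mem_piAntidiag.1 hg).2 a h)
    rw [prod_cons]
    congr 1
    · simp [hga]
    · exact prod_congr rfl fun i hi => by simp [ne_of_mem_of_not_mem hi ha]

lemma Nat.sum_range_choose_eq_choose_succ_s4 (N t : ℕ) :
    ∑ x ∈ range N, x.choose t = N.choose (t + 1) := by
  induction N with
  | zero => simp
  | succ N ih => rw [sum_range_succ, ih, Nat.choose_succ_succ', add_comm]

lemma Nat.antidiagonalTuple_self_filter_not_exists_eq_zero (k : ℕ) :
    {m ∈ Nat.antidiagonalTuple k k | ¬ ∃ r, m r = 0} = {1} := by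
  ext m
  simp only [mem_filter, Nat.mem_antidiagonalTuple, mem_singleton, not_exists]
  constructor
  · rintro ⟨hsum, hm⟩
    have hle : ∀ j ∈ univ, (1 : Fin k → ℕ) j ≤ m j :=
      fun j _ => Nat.one_le_iff_ne_zero.2 (hm j)
    exact funext fun j => ((sum_eq_sum_iff_of_le hle).1 (by simp [hsum]) j (mem_univ j)).symm
  · rintro rfl
    simp

lemma sum_filter_piFinset_range_prod_eq_Ico {k : ℕ} (N : ℕ) (P : (Fin k → ℕ) → Prop)
    [DecidablePred P] :
    ∑ z ∈ piFinset (fun _ => range N) with P z, ∏ j, z j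
      = ∑ z ∈ piFinset (fun _ => Ico 1 N) with P z, ∏ j, z j := by
  have hIco : Ico 1 N ⊆ range N := range_eq_Ico N ▸ Ico_subset_Ico_left zero_le_one
  refine (sum_subset (filter_subset_filter _ (piFinset_subset _ _ fun _ => hIco))
    fun z hz hz' => ?_).symm
  simp only [mem_filter, mem_piFinset, mem_range, mem_Ico, not_and] at hz hz'
  obtain ⟨j, hj⟩ : ∃ j, z j = 0 := by
    by_contra! h
    exact hz' (fun j => ⟨Nat.one_le_iff_ne_zero.2 (h j), hz.1 j⟩) hz.2
  exact prod_eq_zero (mem_univ j) hj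

section LinearCongruence

variable {N k : ℕ} (v : Fin k → (ZMod N)ˣ)

lemma sum_natCast_update_mul (z : Fin k → ℕ) (r : Fin k) (a : ℕ) :
    ∑ j, (update z r a j : ZMod N) * v j = ∑ j, (update z r 0 j : ZMod N) * v j + a * v r := by
  simp_rw [apply_update (fun j (x : ℕ) => (x : ZMod N) * (v j : ZMod N)),
    sum_update_of_mem (mem_univ r)]
  simp [add_comm]

/-- `z ↦ update z r 0` maps the solutions of `∑ z_j v_j = y` bijectively onto the slice `z_r = 0`:
`z_r` is recovered as `(y - ∑ w_j v_j) v_r⁻¹`. -/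
lemma sum_filter_sum_natCast_mul_eq_sum_filter_eq_zero [NeZero N] (y : ZMod N) (r : Fin k)
    {M : Type*} [AddCommMonoid M] (F : (Fin k → ℕ) → M) (hF : ∀ z a, F (update z r a) = F z) :
    ∑ z ∈ piFinset (fun _ => range N) with ∑ j, (z j : ZMod N) * v j = y, F z
      = ∑ w ∈ piFinset (fun _ => range N) with w r = 0, F w := by
  set L : (Fin k → ℕ) → ZMod N := fun z => ∑ j, (z j : ZMod N) * v j
  refine sum_nbij' (update · r 0) (fun w => update w r ((y - L w) * ↑(v r)⁻¹).val)
    ?_ ?_ ?_ ?_ fun z _ => (hF z 0).symm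
  · intro z hz
    simp only [mem_filter, mem_piFinset, mem_range] at hz ⊢
    refine ⟨fun j => ?_, update_self ..⟩
    rcases eq_or_ne j r with rfl | hj
    · simpa using NeZero.pos N
    · simpa [hj] using hz.1 j
  · intro w hw
    simp only [mem_filter, mem_piFinset, mem_range] at hw ⊢
    refine ⟨fun j => ?_, ?_⟩
    · rcases eq_or_ne j r with rfl | hj
      · simpa using ZMod.val_lt _
      · simpa [hj] using hw.1 j
    · rw [sum_natCast_update_mul, update_eq_self_iff.2 hw.2.symm]
      simp [L]
  · intro z hz
    simp only [mem_filter, mem_piFinset, mem_range] at hz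
    have hL : L (update z r 0) = y - z r * v r := by
      rw [← hz.2, eq_sub_iff_add_eq, ← sum_natCast_update_mul, update_eq_self]
    simp only [update_idem, hL, sub_sub_cancel, Units.mul_inv_cancel_right,
      ZMod.val_natCast_of_lt (hz.1 r), update_eq_self]
  · intro w hw
    simp only [mem_filter, mem_piFinset, mem_range] at hw
    simp [← hw.2]

end LinearCongruence

lemma mul_sum_filter_eq_zero_prod_choose (N : ℕ) [NeZero N] {k : ℕ} (m : Fin k → ℕ) (r : Fin k)
    (hm : m r = 0) :
    N * ∑ w ∈ piFinset (fun _ => range N) with w r = 0, ∏ j, (w j).choose (m j)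
      = ∏ j, N.choose (m j + 1) := by
  rw [← piFinset_update_singleton_eq_filter_piFinset_eq (fun _ : Fin k => range N) r
      (by simpa using NeZero.pos N),
    ← prod_univ_sum (κ := fun _ => ℕ) _ fun j x => x.choose (m j),
    ← mul_prod_erase _ _ (mem_univ r), ← mul_prod_erase univ _ (mem_univ r), update_self,
    sum_singleton, hm, Nat.choose_zero_right, zero_add, Nat.choose_one_right, one_mul]
  exact congrArg (N * ·) <| prod_congr rfl fun j hj => by
    rw [update_of_ne (ne_of_mem_erase hj), Nat.sum_range_choose_eq_choose_succ_s4]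

lemma mul_sum_filter_sum_natCast_mul_prod_choose {N k : ℕ} (v : Fin k → (ZMod N)ˣ) (y : ZMod N)
    (m : Fin k → ℕ) (r : Fin k) (hm : m r = 0) :
    N * ∑ z ∈ piFinset (fun _ => range N) with ∑ j, (z j : ZMod N) * v j = y,
        ∏ j, (z j).choose (m j)
      = ∏ j, N.choose (m j + 1) := by
  rcases eq_or_ne N 0 with rfl | hN
  · simp [prod_eq_zero (mem_univ r)]
  have := NeZero.mk hN
  have hF (z : Fin k → ℕ) (a : ℕ) :
      ∏ j, (update z r a j).choose (m j) = ∏ j, (z j).choose (m j) :=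
    prod_congr rfl fun j _ => by
      rcases eq_or_ne j r with rfl | hj
      · simp [hm]
      · rw [update_of_ne hj]
  rw [sum_filter_sum_natCast_mul_eq_sum_filter_eq_zero v y r _ hF,
    mul_sum_filter_eq_zero_prod_choose N m r hm]

theorem stmt_4_general (N k : ℕ) (v : Fin k → (ZMod N)ˣ) (y : ZMod N) :
    N * ∑ z ∈ (Fintype.piFinset fun _ : Fin k => Finset.range N).filter
        (fun z => ∑ j, (z j : ZMod N) * (v j : ZMod N) = y),
      Nat.choose (∑ j, z j) k
    = N * (∑ d ∈ (Fintype.piFinset fun _ : Fin k => Finset.Ico 1 N).filter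
          (fun d => ∑ j, (d j : ZMod N) * (v j : ZMod N) = y), ∏ j, d j)
      + ∑ m ∈ (Finset.Nat.antidiagonalTuple k k).filter (fun m => ∃ r, m r = 0),
          ∏ j, Nat.choose N (m j + 1) := by
  simp_rw [Nat.choose_sum_eq_sum_piAntidiag_prod_choose, piAntidiag_univ_fin_eq_antidiagonalTuple]
  rw [sum_comm, ← sum_filter_add_sum_filter_not _ (fun m => ∃ r, m r = 0),
    Nat.antidiagonalTuple_self_filter_not_exists_eq_zero, sum_singleton, mul_add, mul_sum, add_comm]
  congr 1
  · simp only [Pi.one_apply, Nat.choose_one_right]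
    rw [sum_filter_piFinset_range_prod_eq_Ico]
  · refine sum_congr rfl fun m hm => ?_
    obtain ⟨r, hr⟩ := (mem_filter.1 hm).2
    exact mul_sum_filter_sum_natCast_mul_prod_choose v y m r hr

/-- `∑_{z ∈ R(y)} C(z₁+⋯+z_k, k)` equals
`∑_{1 ≤ d_j < N, ∑ d_j v_j = y} d₁⋯d_k + P_k(N)` where
`P_k(N) = (1/N) ∑_{i₁+⋯+i_k = k, some i_r = 0} C(N,i₁+1)⋯C(N,i_k+1)`
(stated multiplied through by `N`). -/
theorem stmt_4 (N k : ℕ) (hN : 1 < N) (hk : 0 < k) (v : Fin k → (ZMod N)ˣ) (y : ZMod N) :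
    N * ∑ z ∈ (Fintype.piFinset fun _ : Fin k => Finset.range N).filter
        (fun z => ∑ j, (z j : ZMod N) * (v j : ZMod N) = y),
      Nat.choose (∑ j, z j) k
    = N * (∑ d ∈ (Fintype.piFinset fun _ : Fin k => Finset.Ico 1 N).filter
          (fun d => ∑ j, (d j : ZMod N) * (v j : ZMod N) = y), ∏ j, d j)
      + ∑ m ∈ (Finset.Nat.antidiagonalTuple k k).filter (fun m => ∃ r, m r = 0),
          ∏ j, Nat.choose N (m j + 1) :=
  stmt_4_general N k v y
end

section
/- Let N > 1, k ≥ 1 be integers, v_1, …, v_k units of Z/N, and define H(y) = Σ_{(d_1,…,d_k): 1 ≤ d_j < N, d_1 v_1 + ⋯ + d_k v_k ≡ -y mod N} d_1 ··· d_k for y ∈ Z/N. Let q > 1 be an integer coprime to N with q ≡ 1 mod N. Then for any y ∈ Z/N (taking x with x ≡ y and adding l·v over 0 ≤ l_i < q): Σ_{0 ≤ l_1,…,l_k < q} H(y + l_1 v_1 + ⋯ + l_k v_k) = H(y) + N^{k-1} ((N-1)/2)^k (q^k - 1), interpreted as the identity 2^k · Σ_{0 ≤ l < q} H(y + l·v)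 = 2^k H(y) + N^{k-1} (N-1)^k (q^k - 1). -/
/-!
Since `q ≡ 1 (mod N)`, among `0, …, q - 1` every residue occurs `(q - 1) / N` times, except `0`,
which occurs once more. Multiplying by units and convolving, the number of `l ∈ [0, q)^k` with
`∑ l_j v_j = c` is `(q - 1) / N · (1 + q + ⋯ + q^(k-1)) + [c = 0] = (q^k - 1) / N + [c = 0]`.
Exchanging the order of summation then gives
`∑_l H(y + l⋅v) = H(y) + (q^k - 1) / N · (∑_{0<d<N} d)^k`, and `2 ∑_{0<d<N} d = N (N - 1)`.
-/
open Finset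

theorem ZMod.card_filter_range_natCast_eq {N : ℕ} [NeZero N] (b : ℕ) (z : ZMod N) :
    #{a ∈ range b | ((a : ℕ) : ZMod N) = z} = b / N + if z.val < b % N then 1 else 0 := by
  rw [← Nat.mod_eq_of_lt z.val_lt, ← Nat.count_modEq_card b (Nat.pos_of_neZero N),
    Nat.count_eq_card_filter_range]
  congr! 2 with a
  rw [← ZMod.natCast_eq_natCast_iff, ZMod.natCast_zmod_val]

theorem Finset.sum_piFinset_const_succ {α M : Type*} [AddCommMonoid M] {k : ℕ} (s : Finset α)
    (f : (Fin (k + 1) → α) → M) :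
    ∑ l ∈ Fintype.piFinset (fun _ : Fin (k + 1) => s), f l
      = ∑ a ∈ s, ∑ l ∈ Fintype.piFinset (fun _ : Fin k => s), f (Fin.cons a l) := by
  have h : (Fintype.piFinset fun _ => s).map (Fin.consEquiv fun _ => α).symm.toEmbedding
      = s ×ˢ Fintype.piFinset (fun _ : Fin k => s) := by
    have := map_consEquiv_filter_piFinset (fun _ : Fin (k + 1) => s) (fun _ => True)
    simp only [filter_true] at this
    exact this
  rw [← sum_product', ← h, sum_map]
  simp

theorem ZMod.card_filter_range_natCast_eq_of_mod_eq_one {N q : ℕ} [NeZero N] (hq : q % N = 1)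
    (z : ZMod N) :
    #{a ∈ range q | ((a : ℕ) : ZMod N) = z} = q / N + if z = 0 then 1 else 0 := by
  simp [ZMod.card_filter_range_natCast_eq, hq]

theorem ZMod.card_filter_piFinset_range_sum_mul_eq {N q : ℕ} [NeZero N] (hq : q % N = 1) :
    ∀ {k : ℕ} (v : Fin k → (ZMod N)ˣ) (c : ZMod N),
      #{l ∈ Fintype.piFinset (fun _ : Fin k => range q) |
          ∑ j, (l j : ZMod N) * (v j : ZMod N) = c}
        = q / N * ∑ i ∈ range k, q ^ i + if c = 0 then 1 else 0
  | 0, v, c => by split_ifs with hc <;> simp [hc, eq_comm]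
  | k + 1, v, c => by
    have hfiber (a : ℕ) :
        ∑ l ∈ Fintype.piFinset (fun _ : Fin k => range q),
            (if (a : ZMod N) * v 0 + ∑ j, (l j : ZMod N) * (v j.succ : ZMod N) = c then 1 else 0)
          = q / N * ∑ i ∈ range k, q ^ i
              + if (a : ZMod N) = c * ((v 0)⁻¹ : (ZMod N)ˣ) then 1 else 0 := by
      rw [← card_filter]
      simp_rw [← eq_sub_iff_add_eq', ZMod.card_filter_piFinset_range_sum_mul_eq hq,
        sub_eq_zero, Units.eq_mul_inv_iff_mul_eq, eq_comm]
    rw [card_filter, sum_piFinset_const_succ]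
    simp only [Fin.sum_univ_succ, Fin.cons_zero, Fin.cons_succ, hfiber]
    rw [sum_add_distrib, ← card_filter, ZMod.card_filter_range_natCast_eq_of_mod_eq_one hq,
      sum_const, card_range, smul_eq_mul, sum_range_succ']
    simp only [Units.mul_left_eq_zero, pow_succ, ← sum_mul]
    ring

theorem ZMod.sum_piFinset_range_sum_filter_sum_mul_eq {N q k : ℕ} [NeZero N] (hq : q % N = 1)
    (v : Fin k → (ZMod N)ˣ) (D : Finset (Fin k → ℕ)) (f : (Fin k → ℕ) → ℕ) (y : ZMod N) :
    ∑ l ∈ Fintype.piFinset (fun _ : Fin k => range q),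
        ∑ d ∈ D with ∑ j, (d j : ZMod N) * (v j : ZMod N)
          = -(y + ∑ j, (l j : ZMod N) * (v j : ZMod N)), f d
      = ∑ d ∈ D with ∑ j, (d j : ZMod N) * (v j : ZMod N) = -y, f d
        + q / N * (∑ i ∈ range k, q ^ i) * ∑ d ∈ D, f d := by
  have hsymm (a b : ZMod N) : a = -(y + b) ↔ b = -(y + a) := by
    constructor <;> intro h <;> linear_combination h
  have hterm (d : Fin k → ℕ) :
      ∑ l ∈ Fintype.piFinset (fun _ : Fin k => range q),
          (if ∑ j, (d j : ZMod N) * (v j : ZMod N)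
            = -(y + ∑ j, (l j : ZMod N) * (v j : ZMod N)) then f d else 0)
        = f d * (q / N * ∑ i ∈ range k, q ^ i)
          + if ∑ j, (d j : ZMod N) * (v j : ZMod N) = -y then f d else 0 := by
    simp_rw [hsymm (∑ j, (d j : ZMod N) * v j), ← sum_filter, sum_const, smul_eq_mul,
      ZMod.card_filter_piFinset_range_sum_mul_eq hq, neg_eq_zero, add_eq_zero_iff_eq_neg']
    split_ifs <;> ring
  simp_rw [sum_filter]
  rw [sum_comm]
  simp_rw [hterm, sum_add_distrib, ← sum_mul]
  ring

theorem stmt_5_general (N k q : ℕ) (hN : 1 < N) (hk : 0 < k) (hq1 : q % N = 1)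
    (v : Fin k → (ZMod N)ˣ)
    (H : ZMod N → ℕ)
    (hH : ∀ y : ZMod N,
      H y = ∑ d ∈ (Fintype.piFinset fun _ : Fin k => Finset.Ico 1 N).filter
          (fun d => ∑ j, (d j : ZMod N) * (v j : ZMod N) = -y), ∏ j, d j)
    (y : ZMod N) :
    2 ^ k * ∑ l ∈ Fintype.piFinset (fun _ : Fin k => Finset.range q),
        H (y + ∑ j, (l j : ZMod N) * (v j : ZMod N))
    = 2 ^ k * H y + N ^ (k - 1) * (N - 1) ^ k * (q ^ k - 1) := by
  have : NeZero N := ⟨by omega⟩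
  have hgauss : (∑ j ∈ Ico 1 N, j) * 2 = N * (N - 1) := by
    rw [← sum_range_id_mul_two, range_eq_Ico, sum_eq_sum_Ico_succ_bot (show 0 < N by omega),
      zero_add]
  have hgeom : q ^ k - 1 = (∑ i ∈ range k, q ^ i) * (N * (q / N)) := by
    have hq : N * (q / N) + 1 = q := by
      have := Nat.div_add_mod q N
      omega
    have := geom_sum_mul_add (N * (q / N)) k
    rw [hq] at this
    omega
  have hsum : ∑ l ∈ Fintype.piFinset (fun _ : Fin k => range q),
        H (y + ∑ j, (l j : ZMod N) * (v j : ZMod N))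
      = H y + q / N * (∑ i ∈ range k, q ^ i) * (∑ j ∈ Ico 1 N, j) ^ k := by
    simp only [hH]
    rw [ZMod.sum_piFinset_range_sum_filter_sum_mul_eq hq1, sum_pow']
  rw [hsum]
  calc 2 ^ k * (H y + q / N * (∑ i ∈ range k, q ^ i) * (∑ j ∈ Ico 1 N, j) ^ k)
      = 2 ^ k * H y + q / N * (∑ i ∈ range k, q ^ i) * ((∑ j ∈ Ico 1 N, j) * 2) ^ k := by ring
    _ = 2 ^ k * H y + N ^ (k - 1) * (N - 1) ^ k * (q ^ k - 1) := by
      rw [hgauss, mul_pow, ← pow_sub_one_mul hk.ne' N, hgeom]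
      ring

/-- With `H(y) = ∑_{1 ≤ d_j < N, ∑ d_j v_j = -y} d₁⋯d_k` and `q ≡ 1 mod N`, `q` coprime
to `N`, we have `2^k ∑_{0 ≤ l < q} H(y + l⋅v) = 2^k H(y) + N^(k-1) (N-1)^k (q^k - 1)`. -/
theorem stmt_5 (N k q : ℕ) (hN : 1 < N) (hk : 0 < k) (hq : 1 < q)
    (hqcop : Nat.Coprime q N) (hq1 : q % N = 1) (v : Fin k → (ZMod N)ˣ)
    (H : ZMod N → ℕ)
    (hH : ∀ y : ZMod N,
      H y = ∑ d ∈ (Fintype.piFinset fun _ : Fin k => Finset.Ico 1 N).filter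
          (fun d => ∑ j, (d j : ZMod N) * (v j : ZMod N) = -y), ∏ j, d j)
    (y : ZMod N) :
    2 ^ k * ∑ l ∈ Fintype.piFinset (fun _ : Fin k => Finset.range q),
        H (y + ∑ j, (l j : ZMod N) * (v j : ZMod N))
    = 2 ^ k * H y + N ^ (k - 1) * (N - 1) ^ k * (q ^ k - 1) :=
  stmt_5_general N k q hN hk hq1 v H hH y
end

section
/- Fix integers N > 1, h ≥ 1 with gcd(N, h) = 1, a prime power q with q ≡ 1 mod Nh, an integer n ≥ 1, an integer s with 1 ≤ s ≤ h, and an integer t with 1 ≤ t ≤ N. Define Φ = { m ∈ Z : (h - s + q^n s)/h ≤ m < q^n + (h - s + q^n s)/h, and m♯_N > t } and Ψ = { m ∈ Z : 1 + s(q^n - 1)/(Nh) ≤ m < 1 + s(q^n - 1)/(Nh) + (N - t)(q^n - 1)/N }, where m♯_N is the unique integer in (0, N] congruent to m mod N. Then the map ι sending m = m♯_N + kN to (k + 1) + (N - m♯_N)·(q^n - 1)/N is a bijection from Φ to Ψ. -/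
/-!
Write `m = r + kN` with `r = m♯_N ∈ (0, N]`; this is `toIocMod` at base `0`, and
`N - (N - m) % N` in the statement. With `q^n - 1 = N h c`, the set `Φ` becomes
`{r + kN : t < r ≤ N, sc ≤ k < sc + hc}` and `ι (r + kN) = 1 + sc + (k - sc) + (N - r)·hc`.
This is the mixed-radix expansion of `[0, (N - t)·hc)` in base `hc`, so the inverse reads
`N - r` and `k - sc` off as quotient and remainder modulo `hc`.
-/

open Set

namespace Int

variable {N : ℤ} (hN : 0 < N)

lemma toIocMod_zero_eq_sub_emod_sub (m : ℤ) : toIocMod hN 0 m = N - (N - m) % N := by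
  have hlt := emod_lt_of_pos (N - m) hN
  have hnonneg := emod_nonneg (N - m) hN.ne'
  refine (toIocMod_eq_iff hN).2 ⟨⟨by omega, by omega⟩, -((N - m) / N), ?_⟩
  have := emod_add_mul_ediv (N - m) N
  rw [smul_eq_mul]
  linarith

lemma toIocMod_add_toIocDiv_mul (m : ℤ) : toIocMod hN 0 m + toIocDiv hN 0 m * N = m :=
  toIocMod_add_toIocDiv_zsmul hN 0 m

lemma toIocDiv_zero_eq_ediv (m : ℤ) : toIocDiv hN 0 m = (m - toIocMod hN 0 m) / N := by
  have hm := toIocMod_add_toIocDiv_mul hN m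
  rw [show m - toIocMod hN 0 m = toIocDiv hN 0 m * N by omega, mul_ediv_cancel _ hN.ne']

lemma toIocMod_add_mul {r : ℤ} (hr : r ∈ Ioc 0 N) (k : ℤ) :
    toIocMod hN 0 (r + k * N) = r := by
  rw [← smul_eq_mul, toIocMod_add_zsmul, toIocMod_eq_self]
  simpa using hr

lemma toIocDiv_add_mul {r : ℤ} (hr : r ∈ Ioc 0 N) (k : ℤ) :
    toIocDiv hN 0 (r + k * N) = k := by
  rw [← smul_eq_mul, toIocDiv_add_zsmul, (toIocDiv_eq_iff (n := 0) hN).2 (by simpa using hr),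
    zero_add]

lemma toIocDiv_mem_Ico_iff (m a b : ℤ) :
    toIocDiv hN 0 m ∈ Ico a b ↔ N * a < m ∧ m ≤ N * b := by
  obtain ⟨hr0, hrN⟩ : toIocMod hN 0 m ∈ Ioc 0 N := by simpa using toIocMod_mem_Ioc hN 0 m
  conv_rhs => rw [← toIocMod_add_toIocDiv_mul hN m]
  set r := toIocMod hN 0 m
  set k := toIocDiv hN 0 m
  constructor
  · rintro ⟨hak, hkb⟩
    constructor <;> nlinarith
  · rintro ⟨hlow, hup⟩
    constructor
    · by_contra! hka
      nlinarith
    · by_contra! hbk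
      nlinarith

end Int

section

variable {N : ℤ} (hN : 0 < N) {t : ℤ} (a D : ℤ)

theorem bijOn_toIocDiv_add_sub_toIocMod_mul (ht0 : 0 ≤ t) (htN : t ≤ N) :
    BijOn (fun m ↦ toIocDiv hN 0 m + 1 + (N - toIocMod hN 0 m) * D)
      {m | toIocDiv hN 0 m ∈ Ico a (a + D) ∧ t < toIocMod hN 0 m}
      (Ico (1 + a) (1 + a + (N - t) * D)) := by
  set f := fun m ↦ toIocDiv hN 0 m + 1 + (N - toIocMod hN 0 m) * D
  set g := fun y ↦ (N - (y - 1 - a) / D) + (a + (y - 1 - a) % D) * N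
  have hg : ∀ y ∈ Ico (1 + a) (1 + a + (N - t) * D),
      toIocMod hN 0 (g y) = N - (y - 1 - a) / D ∧ toIocDiv hN 0 (g y) = a + (y - 1 - a) % D ∧
        0 ≤ (y - 1 - a) / D ∧ (y - 1 - a) / D < N - t ∧
        0 ≤ (y - 1 - a) % D ∧ (y - 1 - a) % D < D := by
    rintro y ⟨hy1, hy2⟩
    have hD : 0 < D := pos_of_mul_pos_right (by linarith) (by omega : 0 ≤ N - t)
    have hj0 : 0 ≤ (y - 1 - a) / D := Int.ediv_nonneg (by omega) hD.le
    have hjlt : (y - 1 - a) / D < N - t := (Int.ediv_lt_iff_lt_mul hD).2 (by linarith)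
    have hr : N - (y - 1 - a) / D ∈ Ioc 0 N := ⟨by omega, by omega⟩
    exact ⟨Int.toIocMod_add_mul hN hr _, Int.toIocDiv_add_mul hN hr _, hj0, hjlt,
      Int.emod_nonneg _ hD.ne', Int.emod_lt_of_pos _ hD⟩
  refine InvOn.bijOn (f' := g) ⟨?_, ?_⟩ ?_ ?_
  · rintro m ⟨⟨hak, hkD⟩, htr⟩
    have hm := Int.toIocMod_add_toIocDiv_mul hN m
    obtain ⟨hj, hi⟩ := (Int.ediv_emod_unique (by omega : 0 < D)).2
      (⟨by simp only [f]; ring, by omega, by omega⟩ :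
        toIocDiv hN 0 m - a + D * (N - toIocMod hN 0 m) = f m - 1 - a ∧ _ ∧ _)
    show (N - (f m - 1 - a) / D) + (a + (f m - 1 - a) % D) * N = m
    rw [hj, hi]
    linarith
  · intro y hy
    obtain ⟨hr, hk, -, -, -, -⟩ := hg y hy
    have := Int.emod_add_mul_ediv (y - 1 - a) D
    simp only [f, hr, hk]
    linarith
  · rintro m ⟨⟨hak, hkD⟩, htr⟩
    have hrN : toIocMod hN 0 m ≤ N := by simpa using (toIocMod_mem_Ioc hN 0 m).2
    constructor <;> nlinarith
  · intro y hy
    obtain ⟨hr, hk, hj0, hjlt, hi0, hiD⟩ := hg y hy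
    exact ⟨by rw [hk]; constructor <;> omega, by rw [hr]; omega⟩

end

theorem stmt_7_general (N h q : ℤ) (n : ℕ) (s t : ℤ) (hN : 1 < N) (hh : 1 ≤ h)
    (hqmod : q ≡ 1 [ZMOD N * h])
    (ht1 : 1 ≤ t) (ht2 : t ≤ N) :
    Set.BijOn
      (fun m : ℤ => ((m - (N - (N - m) % N)) / N + 1)
        + (N - (N - (N - m) % N)) * ((q ^ n - 1) / N))
      {m : ℤ | (h - s + q ^ n * s) / h ≤ m ∧ m < q ^ n + (h - s + q ^ n * s) / h ∧
        t < N - (N - m) % N}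
      {m : ℤ | 1 + s * (q ^ n - 1) / (N * h) ≤ m ∧
        m < 1 + s * (q ^ n - 1) / (N * h) + (N - t) * ((q ^ n - 1) / N)} := by
  have hN0 : 0 < N := by omega
  obtain ⟨c, hc⟩ : N * h ∣ q ^ n - 1 := by simpa using (hqmod.pow n).symm.dvd
  have hΦ : (h - s + q ^ n * s) / h = 1 + N * (s * c) := by
    rw [show h - s + q ^ n * s = h * (1 + N * (s * c)) by linear_combination s * hc,
      Int.mul_ediv_cancel_left _ (by omega)]
  have hΨ : s * (q ^ n - 1) / (N * h) = s * c := by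
    rw [hc, mul_left_comm, Int.mul_ediv_cancel_left _ (by positivity)]
  have hD : (q ^ n - 1) / N = h * c := by
    rw [hc, mul_assoc, Int.mul_ediv_cancel_left _ hN0.ne']
  rw [hΦ, hΨ, hD, show q ^ n = 1 + N * (h * c) by linear_combination hc]
  simp only [← Int.toIocMod_zero_eq_sub_emod_sub hN0, ← Int.toIocDiv_zero_eq_ediv hN0]
  convert bijOn_toIocDiv_add_sub_toIocMod_mul hN0 (s * c) (h * c) (by omega) ht2 using 1
  · ext m
    simp only [mem_ofPred_eq, Int.toIocDiv_mem_Ico_iff]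
    constructor
    · rintro ⟨hlow, hup, htr⟩
      refine ⟨⟨by linarith, ?_⟩, htr⟩
      by_contra! hgt
      -- the one extra point `1 + N (s c + h c)` of the interval has residue `1 ≤ t`
      have hm : m = 1 + (s * c + h * c) * N := by linarith
      rw [hm, Int.toIocMod_add_mul hN0 ⟨one_pos, hN.le⟩] at htr
      omega
    · rintro ⟨⟨hlow, hup⟩, htr⟩
      exact ⟨by linarith, by linarith, htr⟩
  · rfl

/-- The Ferrero–Greenberg map `ι : m = m♯_N + kN ↦ (k+1) + (N - m♯_N)(q^n-1)/N` is a
bijection from `Φ` to `Ψ`, where `m♯_N = N - (N - m) % N ∈ (0, N]` is the representative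
of `m` mod `N`. -/
theorem stmt_7 (N h q : ℤ) (n : ℕ) (s t : ℤ) (hN : 1 < N) (hh : 1 ≤ h)
    (hcop : IsCoprime N h) (hq : ∃ (p e : ℕ), Nat.Prime p ∧ q = (p : ℤ) ^ e)
    (hqmod : q ≡ 1 [ZMOD N * h]) (hn : 1 ≤ n) (hs1 : 1 ≤ s) (hs2 : s ≤ h)
    (ht1 : 1 ≤ t) (ht2 : t ≤ N) :
    Set.BijOn
      (fun m : ℤ => ((m - (N - (N - m) % N)) / N + 1)
        + (N - (N - (N - m) % N)) * ((q ^ n - 1) / N))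
      {m : ℤ | (h - s + q ^ n * s) / h ≤ m ∧ m < q ^ n + (h - s + q ^ n * s) / h ∧
        t < N - (N - m) % N}
      {m : ℤ | 1 + s * (q ^ n - 1) / (N * h) ≤ m ∧
        m < 1 + s * (q ^ n - 1) / (N * h) + (N - t) * ((q ^ n - 1) / N)} :=
  stmt_7_general N h q n s t hN hh hqmod ht1 ht2
end

section
/- In the setting of the Ferrero-Greenberg map: with N > 1, h ≥ 1, gcd(N,h) = 1, q a power of a prime p with q ≡ 1 mod Nh, n ≥ 1, 1 ≤ s ≤ h, 1 ≤ t ≤ N, and ι: Φ → Ψ the bijection sending m = m♯_N + kN to (k+1) + (N - m♯_N)(q^n - 1)/N, we have m ≡ N·ι(m) (mod q^n) for all m ∈ Φ; consequently p divides m if and only if p divides ι(m). -/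
/-! The representative `m♯ ∈ (0, N]` of `m` modulo `N` satisfies `N ∣ m - m♯`, and with
`N ∣ Q - 1` the definition of `ι` telescopes to the identity `N · ι(m) = m + (N - m♯) · Q`.
Reducing it modulo `Q = q^n` gives the congruence. Any divisor of `Q` is coprime to `N`,
since `N ∣ Q - 1`, so it divides `m` exactly when it divides `N · ι(m)`, i.e. `ι(m)`. -/

namespace FerreroGreenberg

def modRep (N m : ℤ) : ℤ := N - (N - m) % N

def iota (N Q m : ℤ) : ℤ := (m - modRep N m) / N + 1 + (N - modRep N m) * ((Q - 1) / N)

variable {N Q : ℤ}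

theorem dvd_sub_modRep (N m : ℤ) : N ∣ m - modRep N m :=
  ⟨-((N - m) / N), by rw [modRep, Int.emod_def]; ring⟩

theorem mul_iota (hQ : N ∣ Q - 1) (m : ℤ) : N * iota N Q m = m + (N - modRep N m) * Q := by
  have hm := Int.ediv_mul_cancel (dvd_sub_modRep N m)
  have hQ' := Int.ediv_mul_cancel hQ
  rw [iota]
  linear_combination hm + (N - modRep N m) * hQ'

theorem modEq_mul_iota (hQ : N ∣ Q - 1) (m : ℤ) : m ≡ N * iota N Q m [ZMOD Q] :=
  Int.modEq_iff_dvd.mpr ⟨N - modRep N m, by rw [mul_iota hQ]; ring⟩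

end FerreroGreenberg

theorem IsCoprime.of_dvd_of_dvd_sub_one {d N Q : ℤ} (hd : d ∣ Q) (hN : N ∣ Q - 1) :
    IsCoprime d N := by
  obtain ⟨a, rfl⟩ := hd
  obtain ⟨b, hb⟩ := hN
  exact ⟨a, -b, by linear_combination hb⟩

theorem Int.ModEq.dvd_iff_dvd_of_isCoprime {a x d N Q : ℤ} (h : a ≡ N * x [ZMOD Q])
    (hd : d ∣ Q) (hdN : IsCoprime d N) : d ∣ a ↔ d ∣ x := by
  rw [(h.of_dvd hd).dvd_iff]
  exact ⟨hdN.dvd_of_dvd_mul_left, fun hx => hx.mul_left N⟩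

open FerreroGreenberg in
theorem stmt_8_general (N h : ℤ) (p e : ℕ) (he : 1 ≤ e) (q : ℤ)
    (hqdef : q = (p : ℤ) ^ e) (n : ℕ)
    (hqmod : q ≡ 1 [ZMOD N * h]) (hn : 1 ≤ n) (m : ℤ) :
    m ≡ N * (((m - (N - (N - m) % N)) / N + 1)
        + (N - (N - (N - m) % N)) * ((q ^ n - 1) / N)) [ZMOD q ^ n] ∧
    ((p : ℤ) ∣ m ↔ (p : ℤ) ∣ (((m - (N - (N - m) % N)) / N + 1)
        + (N - (N - (N - m) % N)) * ((q ^ n - 1) / N))) := by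
  have hQ : N ∣ q ^ n - 1 := by simpa using ((hqmod.of_mul_right h).pow n).symm.dvd
  have hpQ : (p : ℤ) ∣ q ^ n :=
    (hqdef ▸ dvd_pow_self (p : ℤ) (by omega : e ≠ 0)).pow (by omega : n ≠ 0)
  have hcong := modEq_mul_iota hQ m
  exact ⟨hcong, hcong.dvd_iff_dvd_of_isCoprime hpQ (.of_dvd_of_dvd_sub_one hpQ hQ)⟩

/-- In the Ferrero–Greenberg setting with `q = p^e` (`e ≥ 1`), for all `m ∈ Φ` we have
`m ≡ N·ι(m) (mod q^n)`, and consequently `p ∣ m ↔ p ∣ ι(m)`. -/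
theorem stmt_8 (N h : ℤ) (p e : ℕ) (hp : p.Prime) (he : 1 ≤ e) (q : ℤ)
    (hqdef : q = (p : ℤ) ^ e) (n : ℕ) (s t : ℤ) (hN : 1 < N) (hh : 1 ≤ h)
    (hcop : IsCoprime N h) (hqmod : q ≡ 1 [ZMOD N * h]) (hn : 1 ≤ n)
    (hs1 : 1 ≤ s) (hs2 : s ≤ h) (ht1 : 1 ≤ t) (ht2 : t ≤ N) (m : ℤ)
    (hm : m ∈ {m : ℤ | (h - s + q ^ n * s) / h ≤ m ∧ m < q ^ n + (h - s + q ^ n * s) / h ∧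
      t < N - (N - m) % N}) :
    m ≡ N * (((m - (N - (N - m) % N)) / N + 1)
        + (N - (N - (N - m) % N)) * ((q ^ n - 1) / N)) [ZMOD q ^ n] ∧
    ((p : ℤ) ∣ m ↔ (p : ℤ) ∣ (((m - (N - (N - m) % N)) / N + 1)
        + (N - (N - (N - m) % N)) * ((q ^ n - 1) / N))) :=
  stmt_8_general N h p e he q hqdef n hqmod hn m
end

section
/- Let p be a prime, t ≥ 1, and f: Z_p → Z_p a function such that f(a) ≡ f(b) mod p^n whenever a ≡ b mod p^n for some n ≥ t. Then for all n ≥ t and all a ∈ Z_p, and any subset T ⊆ Z/p, we have Σ_{0 ≤ m < p^n, (m mod p) ∉ T} f(a + m) ≡ 0 (mod p^{n-t}). -/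
open Finset

/-!
Cut `[0, p^(n+1))` into the `p` blocks `p^n i + [0, p^n)`. For `n ≥ t` the summand is
`p^n`-periodic modulo `p^n` (the condition on `m mod p` is `p^n`-periodic because `n ≥ 1`), so the
sum over `[0, p^(n+1))` is `p` times the sum over `[0, p^n)` plus a multiple of `p^n`; since `t ≥ 1`,
`p^n` is divisible by `p^(n+1-t)`, and induction on `n` starting at `n = t` gives the claim.
-/

theorem sum_range_mul_eq_sum_sum {M : Type*} [AddCommMonoid M] (g : ℕ → M) (N k : ℕ) :
    ∑ m ∈ range (N * k), g m = ∑ i ∈ range k, ∑ m ∈ range N, g (N * i + m) := by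
  induction k with
  | zero => simp
  | succ k ih => rw [mul_add_one, sum_range_add, ih, sum_range_succ]

theorem mul_dvd_sum_range_mul {R : Type*} [CommRing R] {g : ℕ → R} {N k : ℕ} {d : R}
    (hsum : d ∣ ∑ m ∈ range N, g m)
    (hg : ∀ i < k, ∀ m < N, (k : R) * d ∣ g (N * i + m) - g m) :
    (k : R) * d ∣ ∑ m ∈ range (N * k), g m := by
  have hsplit : ∑ m ∈ range (N * k), g m =
      k • ∑ m ∈ range N, g m + ∑ i ∈ range k, ∑ m ∈ range N, (g (N * i + m) - g m) := by
    simp only [sum_range_mul_eq_sum_sum, sum_sub_distrib, sum_const, card_range]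
    abel
  rw [hsplit, nsmul_eq_mul]
  exact dvd_add (mul_dvd_mul_left _ hsum) <| dvd_sum fun i hi => dvd_sum fun m hm =>
    hg i (mem_range.1 hi) m (mem_range.1 hm)

theorem pow_sub_dvd_sum_range_pow {R : Type*} [CommRing R] {q t : ℕ} (ht : 1 ≤ t) {g : ℕ → R}
    (hg : ∀ n, t ≤ n → ∀ i m, (q : R) ^ n ∣ g (q ^ n * i + m) - g m)
    (n : ℕ) (hn : t ≤ n) :
    (q : R) ^ (n - t) ∣ ∑ m ∈ range (q ^ n), g m := by
  induction n, hn using Nat.le_induction with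
  | base => simp
  | succ n hn ih =>
    rw [pow_succ, Nat.sub_add_comm hn, pow_succ']
    refine mul_dvd_sum_range_mul ih fun i _ m _ => ?_
    rw [← pow_succ']
    exact (pow_dvd_pow _ (by omega)).trans (hg n hn i m)

/-- If `f : ℤ_p → ℤ_p` satisfies `f(a) ≡ f(b) mod p^n` whenever `a ≡ b mod p^n` with
`n ≥ t`, then for all `n ≥ t`, `a ∈ ℤ_p`, and `T ⊆ ℤ/p`,
`∑_{0 ≤ m < p^n, (m mod p) ∉ T} f(a + m) ≡ 0 (mod p^(n-t))`. -/
theorem stmt_11 (p : ℕ) [Fact p.Prime] (t : ℕ) (ht : 1 ≤ t) (f : ℤ_[p] → ℤ_[p])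
    (hf : ∀ n, t ≤ n → ∀ a b : ℤ_[p], (p : ℤ_[p]) ^ n ∣ a - b →
      (p : ℤ_[p]) ^ n ∣ f a - f b)
    (n : ℕ) (hn : t ≤ n) (a : ℤ_[p]) (T : Set (ZMod p)) [DecidablePred (· ∈ T)] :
    (p : ℤ_[p]) ^ (n - t) ∣
      ∑ m ∈ (Finset.range (p ^ n)).filter (fun m : ℕ => ¬ ((m : ZMod p) ∈ T)),
        f (a + (m : ℤ_[p])) := by
  rw [sum_filter]
  refine pow_sub_dvd_sum_range_pow ht (fun n hn i m => ?_) n hn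
  have hmod : ((p ^ n * i + m : ℕ) : ZMod p) = m := by
    simp [zero_pow (by omega : n ≠ 0)]
  rw [hmod]
  split_ifs
  · simp
  · exact hf n hn _ _ ⟨i, by push_cast; ring⟩
end

section
/- Let N > 1 and h ≥ 1 with gcd(N, h) = 1, let p be a prime with gcd(p, Nh) = 1, and let c be an integer with 1 ≤ c < h (case c < h). Let d be an integer with 0 ≤ d < N. Then the representative in [0, Nh) of (d·h + (c - ((c·h^{-1}) mod N)·h)·p^{-1}) mod Nh equals h·d - N·(((h-c)·(pN)^{-1}) mod h) + N·h·[d < N·(((h-c)(pN)^{-1}) mod h)/h], where [·] is 1 if the condition holds and 0 otherwise, and all inverses and representatives are taken at the indicated moduli with representatives in [0, modulus). -/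
/-!
Write `A = ((h - c)·(pN)⁻¹) mod h` and `B = (c·h⁻¹) mod N`. By the Chinese remainder theorem
`c - B·h ≡ -N·A·p (mod Nh)`: both sides vanish mod `N`, and both are `≡ c` mod `h`. Multiplying by
`p⁻¹`, the argument of the outer `mod Nh` is `≡ h·d - N·A`, and since `h·d` and `N·A` both lie in
`[0, Nh)`, its representative is `h·d - N·A`, plus `Nh` exactly when this difference is negative.
-/

namespace Int

theorem emod_eq_sub_add_ite {M a b x : ℤ} (ha : 0 ≤ a) (haM : a < M) (hb : 0 ≤ b) (hbM : b < M)
    (hx : x ≡ a - b [ZMOD M]) : x % M = a - b + M * if a < b then 1 else 0 := by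
  rw [hx]
  split_ifs with hab
  · rw [← Int.add_mul_emod_self_left (a - b) M 1, Int.emod_eq_of_lt (by omega) (by omega)]
  · rw [Int.emod_eq_of_lt (by omega) (by omega)]
    ring

theorem sub_emod_mul_modEq_zero {N h u : ℤ} (c : ℤ) (hu : h * u ≡ 1 [ZMOD N]) :
    c - c * u % N * h ≡ 0 [ZMOD N] :=
  calc c - c * u % N * h ≡ c - c * u * h [ZMOD N] := ((Int.mod_modEq _ _).mul_right h).sub_left c
    _ = c - c * (h * u) := by ring
    _ ≡ c - c * 1 [ZMOD N] := (hu.mul_left c).sub_left c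
    _ = 0 := by ring

theorem mul_sub_mul_emod_mul_modEq_neg {N h p v : ℤ} (c : ℤ) (hv : p * N * v ≡ 1 [ZMOD h]) :
    N * ((h - c) * v % h) * p ≡ -c [ZMOD h] :=
  calc N * ((h - c) * v % h) * p ≡ N * ((h - c) * v) * p [ZMOD h] :=
        ((Int.mod_modEq _ _).mul_left N).mul_right p
    _ = (h - c) * (p * N * v) := by ring
    _ ≡ (h - c) * 1 [ZMOD h] := hv.mul_left _
    _ ≡ -c [ZMOD h] := Int.modEq_iff_dvd.mpr ⟨-1, by ring⟩

theorem sub_emod_mul_mul_modEq {N h p u v w : ℤ} (c : ℤ) (hcop : IsCoprime N h)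
    (hu : h * u ≡ 1 [ZMOD N]) (hv : p * N * v ≡ 1 [ZMOD h]) (hw : p * w ≡ 1 [ZMOD N * h]) :
    (c - c * u % N * h) * w ≡ -(N * ((h - c) * v % h)) [ZMOD N * h] := by
  set A := (h - c) * v % h
  have hmodN : c - c * u % N * h ≡ -(N * A) * p [ZMOD N] :=
    (sub_emod_mul_modEq_zero c hu).trans (Int.modEq_zero_iff_dvd.mpr ⟨-(A * p), by ring⟩).symm
  have hmodh : c - c * u % N * h ≡ -(N * A) * p [ZMOD h] :=
    calc c - c * u % N * h ≡ c [ZMOD h] := Int.modEq_iff_dvd.mpr ⟨c * u % N, by ring⟩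
      _ = -(-c) := by ring
      _ ≡ -(N * A * p) [ZMOD h] := (mul_sub_mul_emod_mul_modEq_neg c hv).symm.neg
      _ = -(N * A) * p := by ring
  have hmodNh : c - c * u % N * h ≡ -(N * A) * p [ZMOD N * h] :=
    Int.modEq_iff_dvd.mpr
      (hcop.mul_dvd (Int.modEq_iff_dvd.mp hmodN) (Int.modEq_iff_dvd.mp hmodh))
  calc (c - c * u % N * h) * w ≡ -(N * A) * p * w [ZMOD N * h] := hmodNh.mul_right w
    _ = -(N * A) * (p * w) := by ring
    _ ≡ -(N * A) * 1 [ZMOD N * h] := hw.mul_left _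
    _ = -(N * A) := by ring

end Int

theorem stmt_13_general (N h : ℤ) (hN : 1 < N) (hh : 1 ≤ h) (hcop : IsCoprime N h)
    (p : ℕ)
    (c d : ℤ) (hd0 : 0 ≤ d) (hd : d < N)
    (hinv pinv pNinv : ℤ)
    (hhinv : h * hinv ≡ 1 [ZMOD N])
    (hpinv : (p : ℤ) * pinv ≡ 1 [ZMOD N * h])
    (hpNinv : (p : ℤ) * N * pNinv ≡ 1 [ZMOD h]) :
    (d * h + (c - ((c * hinv) % N) * h) * pinv) % (N * h)
      = h * d - N * (((h - c) * pNinv) % h)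
        + N * h * (if h * d < N * (((h - c) * pNinv) % h) then 1 else 0) := by
  have hA0 : 0 ≤ (h - c) * pNinv % h := Int.emod_nonneg _ (by omega)
  have hAh : (h - c) * pNinv % h < h := Int.emod_lt_of_pos _ (by omega)
  apply Int.emod_eq_sub_add_ite (by positivity) (by nlinarith) (by positivity) (by nlinarith)
  calc d * h + (c - c * hinv % N * h) * pinv
      ≡ d * h + -(N * ((h - c) * pNinv % h)) [ZMOD N * h] :=
        (Int.sub_emod_mul_mul_modEq c hcop hhinv hpNinv hpinv).add_left _
    _ = h * d - N * ((h - c) * pNinv % h) := by ring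

/-- Explicit floor identity (case `c < h`): the representative in `[0, Nh)` of
`(d·h + (c - ((c·h⁻¹) mod N)·h)·p⁻¹) mod Nh` equals
`h·d - N·A + N·h·[h·d < N·A]` where `A = ((h-c)·(pN)⁻¹) mod h`. -/
theorem stmt_13 (N h : ℤ) (hN : 1 < N) (hh : 1 ≤ h) (hcop : IsCoprime N h)
    (p : ℕ) (hp : p.Prime) (hpcop : IsCoprime (p : ℤ) (N * h))
    (c d : ℤ) (hc1 : 1 ≤ c) (hc2 : c < h) (hd0 : 0 ≤ d) (hd : d < N)
    (hinv pinv pNinv : ℤ)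
    (hhinv : h * hinv ≡ 1 [ZMOD N])
    (hpinv : (p : ℤ) * pinv ≡ 1 [ZMOD N * h])
    (hpNinv : (p : ℤ) * N * pNinv ≡ 1 [ZMOD h]) :
    (d * h + (c - ((c * hinv) % N) * h) * pinv) % (N * h)
      = h * d - N * (((h - c) * pNinv) % h)
        + N * h * (if h * d < N * (((h - c) * pNinv) % h) then 1 else 0) :=
  stmt_13_general N h hN hh hcop p c d hd0 hd hinv pinv pNinv hhinv hpinv hpNinv
end

section
/- Let N > 1, h ≥ 1, gcd(N,h)=1, p prime with gcd(p, Nh) = 1, d, c integers with 0 ≤ d < N and 1 ≤ c ≤ h, and set A = N·((h-c)·(pN)^{-1} mod h, representative in [0,h)) and B = (c·p^{-1} mod h, representative in [0,h) if c < h, in (0,h] if c = h). Then h·d - A + N·h·[condition] = h·((d - (A + B)·h^{-1}) mod N, lifted appropriately) + B, where [condition] is the indicator d < (A+B)/h (strict, respectively d ≤ A/h when c = h). Equivalently: for c < h, h·d - A + Nh·[d < (A+B)/h] = h·((d - (A+B)/h)♭_N) + B. -/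
/-!
Modulo `h`, `p·p⁻¹ ≡ 1` gives `c·p⁻¹ ≡ c·p⁻¹·(pN)(pN)⁻¹ ≡ cN·(pN)⁻¹`, so
`A + B ≡ N(h - c)(pN)⁻¹ + cN(pN)⁻¹ ≡ 0`. Writing `A + B = h q`, the bounds `0 ≤ A < Nh`,
`0 ≤ B < h` give `0 ≤ q ≤ N`, so `(d - q) mod N` is `d - q` plus `N` exactly when `d < q`,
and the identity becomes linear arithmetic.
-/

namespace Int

theorem dvd_mul_emod_add_emod_of_inverses {h N p c x y : ℤ}
    (hy : p * y ≡ 1 [ZMOD h]) (hx : p * N * x ≡ 1 [ZMOD h]) :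
    h ∣ N * (((h - c) * x) % h) + (c * y) % h := by
  have hcy : c * y ≡ c * N * x [ZMOD h] :=
    calc c * y = c * y * 1 := (mul_one _).symm
      _ ≡ c * y * (p * N * x) [ZMOD h] := hx.symm.mul_left _
      _ = c * N * x * (p * y) := by ring
      _ ≡ c * N * x * 1 [ZMOD h] := hy.mul_left _
      _ = c * N * x := mul_one _
  have hsum : N * (((h - c) * x) % h) + (c * y) % h ≡ 0 [ZMOD h] :=
    calc N * (((h - c) * x) % h) + (c * y) % h
        ≡ N * ((h - c) * x) + c * N * x [ZMOD h] :=
          ((Int.mod_modEq _ _).mul_left _).add ((Int.mod_modEq _ _).trans hcy)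
      _ = 0 + h * (N * x) := by ring
      _ ≡ 0 [ZMOD h] := (Int.modEq_zero_iff_dvd.mpr (dvd_mul_right _ _)).add_left 0
  exact Int.modEq_zero_iff_dvd.mp hsum

theorem nonneg_and_le_of_mul_add_eq_mul {N h r b q : ℤ} (hN : 0 ≤ N)
    (hr0 : 0 ≤ r) (hr : r < h) (hb0 : 0 ≤ b) (hb : b < h) (hq : N * r + b = h * q) :
    0 ≤ q ∧ q ≤ N := by
  constructor <;> nlinarith

theorem sub_emod_eq_add_ite {d q N : ℤ} (hd0 : 0 ≤ d) (hd : d < N) (hq0 : 0 ≤ q) (hq : q ≤ N) :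
    (d - q) % N = d - q + N * (if d < q then 1 else 0) := by
  split_ifs with hdq
  · rw [← Int.add_emod_right (d - q) N, mul_one]
    exact Int.emod_eq_of_lt (by omega) (by omega)
  · rw [mul_zero, add_zero]
    exact Int.emod_eq_of_lt (by omega) (by omega)

end Int

theorem stmt_14_general (N h : ℤ) (hh : 1 ≤ h)
    (p : ℕ)
    (c d : ℤ) (hd0 : 0 ≤ d) (hd : d < N)
    (pinv pNinv : ℤ)
    (hpinv : (p : ℤ) * pinv ≡ 1 [ZMOD h])
    (hpNinv : (p : ℤ) * N * pNinv ≡ 1 [ZMOD h]) :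
    h ∣ (N * (((h - c) * pNinv) % h) + (c * pinv) % h) ∧
    h * d - N * (((h - c) * pNinv) % h)
      + N * h * (if d < (N * (((h - c) * pNinv) % h) + (c * pinv) % h) / h then 1 else 0)
    = h * ((d - (N * (((h - c) * pNinv) % h) + (c * pinv) % h) / h) % N)
      + (c * pinv) % h := by
  have hdvd := Int.dvd_mul_emod_add_emod_of_inverses (c := c) hpinv hpNinv
  refine ⟨hdvd, ?_⟩
  have hh0 : 0 < h := by omega
  obtain ⟨q, hq⟩ := hdvd
  rw [hq, Int.mul_ediv_cancel_left q hh0.ne']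
  obtain ⟨hq0, hqN⟩ := Int.nonneg_and_le_of_mul_add_eq_mul (by omega)
    (Int.emod_nonneg _ hh0.ne') (Int.emod_lt_of_pos _ hh0)
    (Int.emod_nonneg _ hh0.ne') (Int.emod_lt_of_pos _ hh0) hq
  rw [Int.sub_emod_eq_add_ite hd0 hd hq0 hqN]
  linear_combination -hq

/-- With `A = N·(((h-c)·(pN)⁻¹) mod h)` and `B = (c·p⁻¹) mod h` (case `c < h`):
`h ∣ A + B` and `h·d - A + N·h·[d < (A+B)/h] = h·((d - (A+B)/h) mod N) + B`. -/
theorem stmt_14 (N h : ℤ) (hN : 1 < N) (hh : 1 ≤ h) (hcop : IsCoprime N h)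
    (p : ℕ) (hp : p.Prime) (hpcop : IsCoprime (p : ℤ) (N * h))
    (c d : ℤ) (hc1 : 1 ≤ c) (hc2 : c < h) (hd0 : 0 ≤ d) (hd : d < N)
    (pinv pNinv : ℤ)
    (hpinv : (p : ℤ) * pinv ≡ 1 [ZMOD h])
    (hpNinv : (p : ℤ) * N * pNinv ≡ 1 [ZMOD h]) :
    h ∣ (N * (((h - c) * pNinv) % h) + (c * pinv) % h) ∧
    h * d - N * (((h - c) * pNinv) % h)
      + N * h * (if d < (N * (((h - c) * pNinv) % h) + (c * pinv) % h) / h then 1 else 0)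
    = h * ((d - (N * (((h - c) * pNinv) % h) + (c * pinv) % h) / h) % N)
      + (c * pinv) % h :=
  stmt_14_general N h hh p c d hd0 hd pinv pNinv hpinv hpNinv
end

section
/- Let N > 1 and k ≥ 1, and let χ be a function on (Z/N)^k-indexed tuples given by a nontrivial character composed with an affine form: χ(d) = ξ(z + d_1 v_1 + ⋯ + d_k v_k) where ξ is a nontrivial character of Z/N extended by zero and v_i are units. Then Σ_{0 ≤ d_1,…,d_k < N} χ(d) · Π_{i=1}^k (d_i - l_i + N·[l_i > d_i]) = Σ_{0 ≤ d < N} χ(d) · Π_{i=1}^k (d_i + N·[l_i > d_i]) for any integers 0 ≤ l_i < N, where [·] is the indicator. -/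
/-!
Substituting `d_i ≡ a_i + l_i (mod N)` turns the factor `d_i - l_i + N·[l_i > d_i]` into `a_i` and
`d_i + N·[l_i > d_i]` into `a_i + l_i`. Expanding `∏ (a_i + l_i)`, every term other than `∏ a_i`
is independent of some coordinate `a_j`, and it is killed by summing `ξ` along the line in the
direction `a_j`: `∑_t ξ(c + t v_j) = 0` because `ξ` is nontrivial and `v_j` is a unit.
-/

open Finset

namespace ZMod

variable {N : ℕ} [NeZero N]

theorem sum_piFinset_range_eq_sum_val {ι M : Type*} [Fintype ι] [DecidableEq ι] [AddCommMonoid M]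
    (F : (ι → ℕ) → M) :
    ∑ d ∈ Fintype.piFinset fun _ : ι => range N, F d = ∑ a : ι → ZMod N, F fun i => (a i).val := by
  have hval (d : ι → ℕ) (hd : d ∈ Fintype.piFinset fun _ : ι => range N) :
      (fun i => (d i : ZMod N).val) = d := by
    simp only [Fintype.mem_piFinset, mem_range] at hd
    exact funext fun i => val_cast_of_lt (hd i)
  refine Finset.sum_nbij' (fun d i => (d i : ZMod N)) (fun a i => (a i).val) (by simp)
    (by simp [val_lt]) hval (by simp) fun d hd => by rw [hval d hd]

theorem val_add_natCast_add_ite {R : Type*} [Semiring R] (x : ZMod N) {l : ℕ} (hl : l < N) :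
    ((x + l).val : R) + N * (if l > (x + l).val then 1 else 0) = x.val + l := by
  rw [val_add, val_cast_of_lt hl]
  have hx := x.val_lt
  by_cases h : x.val + l < N
  · rw [Nat.mod_eq_of_lt h, if_neg (by omega)]
    simp
  · rw [Nat.mod_eq_sub_mod (by omega), Nat.mod_eq_of_lt (by omega), if_pos (by omega), mul_one,
      ← Nat.cast_add, Nat.sub_add_cancel (by omega), Nat.cast_add]

end ZMod

theorem MulChar.sum_add_mul_unit_eq_zero {R R' : Type*} [CommRing R] [Fintype R] [CommRing R']
    [IsDomain R'] {χ : MulChar R R'} (hχ : χ ≠ 1) (c : R) (u : Rˣ) :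
    ∑ t, χ (c + t * u) = 0 := by
  rw [← sum_eq_zero_of_ne_one hχ]
  exact Fintype.sum_equiv ((Units.mulRight u).trans (Equiv.addLeft c)) _ _ fun _ => rfl

theorem sum_add_single_mul {ι R : Type*} [Fintype ι] [DecidableEq ι] [Semiring R]
    (a v : ι → R) (j : ι) (t : R) :
    ∑ i, (a + (Pi.single j t : ι → R)) i * v i = ∑ i, a i * v i + t * v j := by
  simp [add_mul, sum_add_distrib, Pi.single_apply]

section TranslationInvariance

variable {ι G R : Type*} [Fintype ι] [DecidableEq ι] [AddCommGroup G] [Fintype G]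
  [CommRing R] [NoZeroSMulDivisors ℕ R] {Φ : (ι → G) → R}

theorem sum_mul_eq_zero_of_sum_add_single_eq_zero {j : ι}
    (hΦ : ∀ a : ι → G, ∑ t : G, Φ (a + Pi.single j t) = 0) {h : (ι → G) → R}
    (hh : ∀ (a : ι → G) (t : G), h (a + Pi.single j t) = h a) : ∑ a, Φ a * h a = 0 := by
  have htranslate (t : G) : ∑ a, Φ a * h a = ∑ a, h a * Φ (a + Pi.single j t) := by
    rw [← Equiv.sum_comp (Equiv.addRight (Pi.single j t))]
    simp only [Equiv.coe_addRight, hh, mul_comm]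
  have : Fintype.card G • ∑ a, Φ a * h a = 0 := by
    rw [← Finset.card_univ, ← Finset.sum_const, Finset.sum_congr rfl fun t _ => htranslate t,
      Finset.sum_comm]
    simp only [← Finset.mul_sum, hΦ, mul_zero, Finset.sum_const_zero]
  exact (smul_eq_zero.mp this).resolve_left Fintype.card_ne_zero

theorem sum_mul_prod_add_eq_sum_mul_prod (hΦ : ∀ j (a : ι → G), ∑ t : G, Φ (a + Pi.single j t) = 0)
    (g : ι → G → R) (c : ι → R) :
    ∑ a, Φ a * ∏ i, (g i (a i) + c i) = ∑ a, Φ a * ∏ i, g i (a i) := by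
  simp only [Finset.prod_add, Finset.mul_sum]
  rw [Finset.sum_comm, Finset.sum_eq_single_of_mem univ (mem_powerset_self _)]
  · simp
  intro s _ hs
  obtain ⟨j, hj⟩ : ∃ j, j ∉ s := by simpa [Finset.eq_univ_iff_forall] using hs
  refine sum_mul_eq_zero_of_sum_add_single_eq_zero (hΦ j) fun a t => ?_
  congr 1
  refine Finset.prod_congr rfl fun i hi => ?_
  rw [Pi.add_apply, Pi.single_eq_of_ne (ne_of_mem_of_not_mem hi hj), add_zero]

end TranslationInvariance

theorem stmt_16_general (N k : ℕ) (hN : 1 < N) (ξ : DirichletCharacter ℂ N)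
    (hξ : ξ ≠ 1) (v : Fin k → (ZMod N)ˣ) (z : ZMod N) (l : Fin k → ℕ)
    (hl : ∀ i, l i < N) :
    ∑ d ∈ Fintype.piFinset (fun _ : Fin k => Finset.range N),
        ξ (z + ∑ j, (d j : ZMod N) * (v j : ZMod N))
          * ∏ i, ((d i : ℂ) - (l i : ℂ) + N * if l i > d i then 1 else 0)
    = ∑ d ∈ Fintype.piFinset (fun _ : Fin k => Finset.range N),
        ξ (z + ∑ j, (d j : ZMod N) * (v j : ZMod N))
          * ∏ i, ((d i : ℂ) + N * if l i > d i then 1 else 0) := by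
  have : NeZero N := ⟨by omega⟩
  set L : Fin k → ZMod N := fun i => l i
  set w := z + ∑ j, L j * v j
  set Φ : (Fin k → ZMod N) → ℂ := fun a => ξ (w + ∑ j, a j * v j)
  have hΦ (j : Fin k) (a : Fin k → ZMod N) : ∑ t : ZMod N, Φ (a + Pi.single j t) = 0 := by
    simp only [Φ, sum_add_single_mul, ← add_assoc]
    exact ξ.sum_add_mul_unit_eq_zero hξ _ (v j)
  have hshift (F : Fin k → ℕ → ℂ) : ∑ d ∈ Fintype.piFinset (fun _ : Fin k => Finset.range N),
      ξ (z + ∑ j, (d j : ZMod N) * (v j : ZMod N)) * ∏ i, F i (d i)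
      = ∑ a, Φ a * ∏ i, F i (a i + L i).val := by
    rw [ZMod.sum_piFinset_range_eq_sum_val, ← Equiv.sum_comp (Equiv.addRight L)]
    refine Fintype.sum_congr _ _ fun a => ?_
    simp only [Equiv.coe_addRight, Pi.add_apply, ZMod.natCast_zmod_val, Φ, w, add_mul,
      sum_add_distrib]
    ring_nf
  rw [hshift fun i d => (d : ℂ) - l i + N * if l i > d then 1 else 0,
    hshift fun i d => (d : ℂ) + N * if l i > d then 1 else 0]
  have hfactor_sub (x : ZMod N) (i : Fin k) :
      (((x + L i).val : ℂ) - l i + N * if l i > (x + L i).val then 1 else 0) = x.val := by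
    linear_combination ZMod.val_add_natCast_add_ite (R := ℂ) x (hl i)
  have hfactor_add (x : ZMod N) (i : Fin k) :
      (((x + L i).val : ℂ) + N * if l i > (x + L i).val then 1 else 0) = x.val + l i :=
    ZMod.val_add_natCast_add_ite x (hl i)
  simp only [hfactor_sub, hfactor_add]
  exact (sum_mul_prod_add_eq_sum_mul_prod hΦ (fun _ x => (x.val : ℂ)) fun i => (l i : ℂ)).symm

/-- For a nontrivial Dirichlet character `ξ` mod `N` (extended by zero), units `v_i`,
and `0 ≤ l_i < N`:
`∑_d ξ(z + ∑ d_j v_j) ∏_i (d_i - l_i + N·[l_i > d_i])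
  = ∑_d ξ(z + ∑ d_j v_j) ∏_i (d_i + N·[l_i > d_i])`,
the sums ranging over `d ∈ [0,N)^k`. -/
theorem stmt_16 (N k : ℕ) (hN : 1 < N) (hk : 1 ≤ k) (ξ : DirichletCharacter ℂ N)
    (hξ : ξ ≠ 1) (v : Fin k → (ZMod N)ˣ) (z : ZMod N) (l : Fin k → ℕ)
    (hl : ∀ i, l i < N) :
    ∑ d ∈ Fintype.piFinset (fun _ : Fin k => Finset.range N),
        ξ (z + ∑ j, (d j : ZMod N) * (v j : ZMod N))
          * ∏ i, ((d i : ℂ) - (l i : ℂ) + N * if l i > d i then 1 else 0)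
    = ∑ d ∈ Fintype.piFinset (fun _ : Fin k => Finset.range N),
        ξ (z + ∑ j, (d j : ZMod N) * (v j : ZMod N))
          * ∏ i, ((d i : ℂ) + N * if l i > d i then 1 else 0) :=
  stmt_16_general N k hN ξ hξ v z l hl
end
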